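/- Let ℙ be a shift-invariant probability measure on 𝒜^ℕ satisfying the upper-decoupling inequality ℙ_{n+m}(ab) ≤ C ℙₙ(a) ℙₘ(b). Then for every n, every word a with ℙₙ(a) > 0, and every j ≥ 1: ℙ({x : R̂ₙ(x) = j and x₁ⁿ = a}) ≤ C² ℙₙ(a) ℙ̂ₙ(a), where R̂ₙ(x) = inf{k ≥ 1 : x_{n+k}^{n+k+n−1} = x̂₁ⁿ}. -/

import Mathlib

/-!
If `R̂ₙ(x) = j` and `x₁ⁿ = a`, then `x` starts with the word `a ζ â`, where `ζ = x_{n+1}^{n+j-1}`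
is the gap word. Applying the decoupling inequality twice bounds the cylinder `[a ζ â]` by
`C² ℙₙ(a) ℙ_{j-1}(ζ) ℙₙ(â)`, and summing over `ζ` uses `∑_ζ ℙ_{j-1}(ζ) = 1`.
-/

open MeasureTheory Filter Finset

variable {𝒜 : Type*}

/-- The left shift on one-sided sequences. -/
def shift : (ℕ → 𝒜) → (ℕ → 𝒜) := fun x n => x (n + 1)

/-- The `n`-prefix of a sequence (0-indexed). -/
def pref (n : ℕ) (x : ℕ → 𝒜) : Fin n → 𝒜 := fun i => x i.val

/-- The cylinder determined by a word. -/
def cyl {n : ℕ} (a : Fin n → 𝒜) : Set (ℕ → 𝒜) := {x | pref n x = a}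

/-- The `n`-th marginal of a measure, as a real-valued function on words. -/
noncomputable def marg [MeasurableSpace 𝒜] (P : Measure (ℕ → 𝒜)) (n : ℕ)
    (a : Fin n → 𝒜) : ℝ := (P (cyl a)).toReal

/-- The reversal of a word with respect to an involution `θ`. -/
def wordRev (θ : 𝒜 → 𝒜) {n : ℕ} (a : Fin n → 𝒜) : Fin n → 𝒜 := fun i => θ (a i.rev)

/-- Shift invariance of a measure. -/
def ShiftInv [MeasurableSpace 𝒜] (P : Measure (ℕ → 𝒜)) : Prop :=
  ∀ s : Set (ℕ → 𝒜), P (shift ⁻¹' s) = P s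

/-- The waiting time `Wₙ(x,y)`: first `k ≥ 1` such that `y_k^{k+n−1} = x₁ⁿ`
(0-indexed: `y (k−1+i) = x i` for `i < n`), with value `∞` if no such `k` exists. -/
noncomputable def waitT (n : ℕ) (x y : ℕ → 𝒜) : ℕ∞ :=
  sInf ((fun k : ℕ => (k : ℕ∞)) ''
    {k : ℕ | 1 ≤ k ∧ ∀ i : Fin n, y (k - 1 + i.val) = x i.val})

/-- The recurrence time `Rₙ(x)`: first `k ≥ 1` such that `x_{n+k}^{n+k+n−1} = x₁ⁿ`. -/
noncomputable def recT (n : ℕ) (x : ℕ → 𝒜) : ℕ∞ :=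
  sInf ((fun k : ℕ => (k : ℕ∞)) ''
    {k : ℕ | 1 ≤ k ∧ ∀ i : Fin n, x (n + k - 1 + i.val) = x i.val})

/-- The reversed recurrence time `R̂ₙ(x)`: first `k ≥ 1` such that
`x_{n+k}^{n+k+n−1} = x̂₁ⁿ`, where `x̂₁ⁿ` is the `θ`-reversal of the `n`-prefix. -/
noncomputable def recRevT (θ : 𝒜 → 𝒜) (n : ℕ) (x : ℕ → 𝒜) : ℕ∞ :=
  sInf ((fun k : ℕ => (k : ℕ∞)) ''
    {k : ℕ | 1 ≤ k ∧ ∀ i : Fin n, x (n + k - 1 + i.val) = wordRev θ (pref n x) i})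

lemma measurable_pref [MeasurableSpace 𝒜] (n : ℕ) : Measurable (pref (𝒜 := 𝒜) n) :=
  measurable_pi_lambda _ fun i => measurable_pi_apply i.val

lemma sum_marg_eq_one [Fintype 𝒜] [MeasurableSpace 𝒜] [MeasurableSingletonClass 𝒜]
    (P : Measure (ℕ → 𝒜)) [IsProbabilityMeasure P] (n : ℕ) :
    ∑ a : Fin n → 𝒜, marg P n a = 1 := by
  have := sum_measureReal_preimage_singleton (μ := P) Finset.univ
    (fun a _ => measurable_pref n (measurableSet_singleton a))
  rw [Finset.coe_univ, Set.preimage_univ, probReal_univ] at this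
  exact this

lemma mem_of_sInf_image_natCast_eq {K : Set ℕ} {j : ℕ}
    (h : sInf ((fun k : ℕ => (k : ℕ∞)) '' K) = j) : j ∈ K := by
  have hK : ((fun k : ℕ => (k : ℕ∞)) '' K).Nonempty := by
    by_contra hempty
    rw [Set.not_nonempty_iff_eq_empty.mp hempty, sInf_empty] at h
    exact ENat.natCast_ne_top j h.symm
  obtain ⟨k, hk, hkj⟩ := h ▸ csInf_mem hK
  rwa [← Nat.cast_inj.mp hkj]

def UpperDecoupling [MeasurableSpace 𝒜] (P : Measure (ℕ → 𝒜)) (C : ℝ) : Prop :=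
  ∀ (n m : ℕ) (a : Fin n → 𝒜) (b : Fin m → 𝒜),
    marg P (n + m) (Fin.append a b) ≤ C * marg P n a * marg P m b

lemma UpperDecoupling.marg_append_append_le [MeasurableSpace 𝒜] {P : Measure (ℕ → 𝒜)} {C : ℝ}
    (hdec : UpperDecoupling P C) (hC : 0 ≤ C) {n m k : ℕ}
    (a : Fin n → 𝒜) (ζ : Fin m → 𝒜) (b : Fin k → 𝒜) :
    marg P (n + m + k) (Fin.append (Fin.append a ζ) b)
      ≤ C ^ 2 * marg P n a * marg P k b * marg P m ζ :=
  calc marg P (n + m + k) (Fin.append (Fin.append a ζ) b)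
      ≤ C * marg P (n + m) (Fin.append a ζ) * marg P k b := hdec _ _ _ _
    _ ≤ C * (C * marg P n a * marg P m ζ) * marg P k b := by
        gcongr
        · exact measureReal_nonneg
        · exact hdec _ _ _ _
    _ = C ^ 2 * marg P n a * marg P k b * marg P m ζ := by ring

lemma pref_eq_append_append {x : ℕ → 𝒜} {n m k : ℕ} {a : Fin n → 𝒜} {b : Fin k → 𝒜}
    (ha : pref n x = a) (hb : ∀ i : Fin k, x (n + m + i) = b i) :
    pref (n + m + k) x = Fin.append (Fin.append a (fun i : Fin m => x (n + i))) b := by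
  funext i
  refine Fin.addCases (fun i => ?_) (fun i => ?_) i
  · refine Fin.addCases (fun i => ?_) (fun i => ?_) i
    · simp [← ha, pref]
    · simp [pref]
  · simp [pref, hb]

lemma recRevT_eq_subset_iUnion_cyl (θ : 𝒜 → 𝒜) {n j : ℕ} (hj : 1 ≤ j) (a : Fin n → 𝒜) :
    {x | recRevT θ n x = j ∧ pref n x = a} ⊆
      ⋃ ζ : Fin (j - 1) → 𝒜, cyl (Fin.append (Fin.append a ζ) (wordRev θ a)) := by
  rintro x ⟨hrec, rfl⟩
  obtain ⟨-, hmatch⟩ := mem_of_sInf_image_natCast_eq hrec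
  refine Set.mem_iUnion.mpr ⟨_, pref_eq_append_append rfl fun i => ?_⟩
  rw [← hmatch i]
  congr 1
  omega

theorem recRev_level_estimate_general [Fintype 𝒜] [MeasurableSpace 𝒜] [MeasurableSingletonClass 𝒜]
    (θ : 𝒜 → 𝒜)
    (P : Measure (ℕ → 𝒜)) [IsProbabilityMeasure P]
    (C : ℝ) (hC : 1 ≤ C)
    (hdec : ∀ (n m : ℕ) (a : Fin n → 𝒜) (b : Fin m → 𝒜),
      marg P (n + m) (Fin.append a b) ≤ C * marg P n a * marg P m b) :
    ∀ (n : ℕ) (a : Fin n → 𝒜), 0 < marg P n a → ∀ j : ℕ, 1 ≤ j →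
      (P {x | recRevT θ n x = (j : ℕ∞) ∧ pref n x = a}).toReal ≤
        C ^ 2 * marg P n a * marg P n (wordRev θ a) := by
  intro n a _ j hj
  calc P.real {x | recRevT θ n x = j ∧ pref n x = a}
      ≤ ∑ ζ : Fin (j - 1) → 𝒜, marg P _ (Fin.append (Fin.append a ζ) (wordRev θ a)) :=
        (measureReal_mono (recRevT_eq_subset_iUnion_cyl θ hj a)).trans
          (measureReal_iUnion_fintype_le _)
    _ ≤ ∑ ζ : Fin (j - 1) → 𝒜, C ^ 2 * marg P n a * marg P n (wordRev θ a) * marg P _ ζ :=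
        Finset.sum_le_sum fun ζ _ =>
          UpperDecoupling.marg_append_append_le hdec (zero_le_one.trans hC) a ζ _
    _ = C ^ 2 * marg P n a * marg P n (wordRev θ a) := by
        rw [← Finset.mul_sum, sum_marg_eq_one, mul_one]

/-- Under the upper-decoupling inequality `ℙ_{n+m}(ab) ≤ C ℙₙ(a) ℙₘ(b)`, for every `n`,
every word `a` with `ℙₙ(a) > 0` and every `j ≥ 1`:
`ℙ({x : R̂ₙ(x) = j, x₁ⁿ = a}) ≤ C² ℙₙ(a) ℙ̂ₙ(a)`. -/
theorem recRev_level_estimate [Fintype 𝒜] [MeasurableSpace 𝒜] [MeasurableSingletonClass 𝒜]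
    (θ : 𝒜 → 𝒜) (hθ : Function.Involutive θ)
    (P : Measure (ℕ → 𝒜)) [IsProbabilityMeasure P] (hinv : ShiftInv P)
    (C : ℝ) (hC : 1 ≤ C)
    (hdec : ∀ (n m : ℕ) (a : Fin n → 𝒜) (b : Fin m → 𝒜),
      marg P (n + m) (Fin.append a b) ≤ C * marg P n a * marg P m b) :
    ∀ (n : ℕ) (a : Fin n → 𝒜), 0 < marg P n a → ∀ j : ℕ, 1 ≤ j →
      (P {x | recRevT θ n x = (j : ℕ∞) ∧ pref n x = a}).toReal ≤
        C ^ 2 * marg P n a * marg P n (wordRev θ a) :=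
  recRev_level_estimate_general θ P C hC hdec
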